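/- arXiv:2210.11778 — 3 statements merged into one kernel-verified Lean document; each statement's English description precedes it below -/
import Mathlib

section
/- Let G be a finite simple graph with distinct terminals s_1,…,s_k,t_1,…,t_k, and let U ⊆ V(G) be a set of size k containing no terminal such that U separates {s_1,…,s_k} from {t_1,…,t_k}. Then: (a) for every linkage 𝒫 = (P_1,…,P_k), each path P_i contains exactly one vertex of U; and (b) if a linkage 𝒫 is reconfigurable to a linkage 𝒬, then for every i the unique vertex of U on P_i equals the unique vertex of U on Q_i. -/
open Set

/-- A plane embedding of a finite simple graph. -/
structure PlaneEmbedding {V : Type} [Fintype V] [DecidableEq V] (G : SimpleGraph V) where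
  vert : V → ℝ × ℝ
  vert_inj : Function.Injective vert
  arc : ∀ {u v : V}, G.Adj u v → Path (vert u) (vert v)
  arc_inj : ∀ {u v : V} (h : G.Adj u v), Function.Injective (arc h)
  arc_symm : ∀ {u v : V} (h : G.Adj u v), arc h.symm = (arc h).symm
  arc_arc : ∀ {u v x y : V} (h : G.Adj u v) (h' : G.Adj x y),
    s(u, v) ≠ s(x, y) →
    Set.range (arc h) ∩ Set.range (arc h') ⊆ vert '' (({u, v} : Set V) ∩ {x, y})
  arc_vert : ∀ {u v : V} (h : G.Adj u v),
    Set.range (arc h) ∩ Set.range vert ⊆ {vert u, vert v}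

namespace PlaneEmbedding

variable {V : Type} [Fintype V] [DecidableEq V] {G : SimpleGraph V}

/-- The image of a plane embedding: all vertex points and all arc points. -/
def image (emb : PlaneEmbedding G) : Set (ℝ × ℝ) :=
  Set.range emb.vert ∪ ⋃ (u : V) (v : V) (h : G.Adj u v), Set.range (emb.arc h)

/-- A face of a plane embedding is a connected component of the complement of the image. -/
def IsFace (emb : PlaneEmbedding G) (F : Set (ℝ × ℝ)) : Prop :=
  ∃ x ∈ (emb.image)ᶜ, F = connectedComponentIn (emb.image)ᶜ x

/-- The curve of a walk: the concatenation of the arcs of its edges. -/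
noncomputable def walkCurve (emb : PlaneEmbedding G) :
    ∀ {u v : V}, G.Walk u v → Path (emb.vert u) (emb.vert v)
  | _, _, SimpleGraph.Walk.nil => Path.refl _
  | _, _, SimpleGraph.Walk.cons h w => (emb.arc h).trans (emb.walkCurve w)

end PlaneEmbedding

/-- A linkage: a tuple of pairwise vertex-disjoint paths, `path i` from `s i` to `t i`. -/
structure Linkage {V : Type} [Fintype V] [DecidableEq V] (G : SimpleGraph V) (k : ℕ)
    (s t : Fin k → V) where
  path : ∀ i : Fin k, G.Walk (s i) (t i)
  isPath : ∀ i, (path i).IsPath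
  disjoint : ∀ i j, i ≠ j → ∀ x : V, x ∈ (path i).support → x ∉ (path j).support

namespace Linkage

variable {V : Type} [Fintype V] [DecidableEq V] {G : SimpleGraph V} {k : ℕ} {s t : Fin k → V}

/-- Two linkages are adjacent if they differ in exactly one path. -/
def Adjacent (P Q : Linkage G k s t) : Prop :=
  ∃ i : Fin k, P.path i ≠ Q.path i ∧ ∀ j : Fin k, j ≠ i → P.path j = Q.path j

/-- A linkage is reconfigurable to another if there is a finite sequence of linkages
from one to the other in which consecutive members are adjacent. -/
def Reconfigurable (P Q : Linkage G k s t) : Prop :=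
  Relation.ReflTransGen Adjacent P Q

end Linkage

/-- An s-t linkage of size k: a set of k pairwise internally vertex-disjoint s-t paths. -/
structure STLinkage {V : Type} [Fintype V] [DecidableEq V] (G : SimpleGraph V) (s t : V)
    (k : ℕ) where
  paths : Finset (G.Path s t)
  card_eq : paths.card = k
  disjoint : ∀ P ∈ paths, ∀ Q ∈ paths, P ≠ Q →
    ∀ x : V, x ∈ (P : G.Walk s t).support → x ∈ (Q : G.Walk s t).support → x = s ∨ x = t

namespace STLinkage

variable {V : Type} [Fintype V] [DecidableEq V] {G : SimpleGraph V} {s t : V} {k : ℕ}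

/-- Two s-t linkages are adjacent if one is obtained from the other by removing one path
and adding one path. -/
def Adjacent (P Q : STLinkage G s t k) : Prop :=
  ∃ (p q : G.Path s t), p ∈ P.paths ∧ q ∉ P.paths ∧ Q.paths = insert q (P.paths.erase p)

/-- An s-t linkage is reconfigurable to another if there is a finite sequence of s-t linkages
from one to the other in which consecutive members are adjacent. -/
def Reconfigurable (P Q : STLinkage G s t k) : Prop :=
  Relation.ReflTransGen Adjacent P Q

end STLinkage

/-- An s-t separator: a set of vertices avoiding s and t that meets every s-t path. -/
def IsSTSeparator {V : Type} [Fintype V] [DecidableEq V] (G : SimpleGraph V) (s t : V)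
    (U : Finset V) : Prop :=
  s ∉ U ∧ t ∉ U ∧ ∀ W : G.Walk s t, ∃ x ∈ U, x ∈ W.support

/-- A terminal separator: a set of vertices containing no terminals that meets every path
from a source terminal to a sink terminal. -/
def IsTerminalSeparator {V : Type} [Fintype V] [DecidableEq V] (G : SimpleGraph V) {k : ℕ}
    (s t : Fin k → V) (U : Finset V) : Prop :=
  (∀ i, s i ∉ U) ∧ (∀ i, t i ∉ U) ∧
  ∀ (i j : Fin k) (W : G.Walk (s i) (t j)), ∃ x ∈ U, x ∈ W.support

/-- Two paths with the same endpoints are homotopic within a set `A` if there is a homotopy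
between them, relative to the endpoints, whose image is contained in `A`. -/
def HomotopicIn {X : Type} [TopologicalSpace X] (A : Set X) {x y : X}
    (γ₀ γ₁ : Path x y) : Prop :=
  ∃ H : C(unitInterval × unitInterval, X),
    (∀ a b : unitInterval, H (a, b) ∈ A) ∧
    (∀ b : unitInterval, H (0, b) = γ₀ b) ∧
    (∀ b : unitInterval, H (1, b) = γ₁ b) ∧
    (∀ a : unitInterval, H (a, 0) = x) ∧
    (∀ a : unitInterval, H (a, 1) = y)

/-!
Every path of a linkage meets `U`, and the paths are pairwise disjoint, so choosing a vertex
of `U` on each path gives an injection `Fin k → U`; since `#U ≤ k` it is a bijection. Hence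
each path meets `U` exactly once and every vertex of `U` lies on some path. When one path of
a linkage is replaced, a vertex of `U` on the new path already lies on some path, which by
disjointness cannot be any of the unchanged ones; so the vertex of `U` on each path survives
every reconfiguration step.
-/

open scoped Finset

namespace Linkage

variable {V : Type} [Fintype V] [DecidableEq V] {G : SimpleGraph V} {k : ℕ} {s t : Fin k → V}

lemma eq_of_mem_support (P : Linkage G k s t) {i j : Fin k} {x : V}
    (hi : x ∈ (P.path i).support) (hj : x ∈ (P.path j).support) : i = j :=
  by_contra fun hij => P.disjoint i j hij x hi hj

lemma Adjacent.symm {P Q : Linkage G k s t} (h : P.Adjacent Q) : Q.Adjacent P := by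
  obtain ⟨i, hne, heq⟩ := h
  exact ⟨i, Ne.symm hne, fun j hj => (heq j hj).symm⟩

section Transversal

variable {P : Linkage G k s t} {U : Finset V} {f : Fin k → V}

lemma image_eq_of_mem_support (hU : #U ≤ k) (hfU : ∀ i, f i ∈ U)
    (hf : ∀ i, f i ∈ (P.path i).support) : Finset.univ.image f = U := by
  have hinj : Function.Injective f := fun i j hij => P.eq_of_mem_support (hf i) (hij ▸ hf j)
  refine Finset.eq_of_subset_of_card_le (fun x hx => ?_) ?_
  · obtain ⟨i, -, rfl⟩ := Finset.mem_image.1 hx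
    exact hfU i
  · rwa [Finset.card_image_of_injective _ hinj, Finset.card_univ, Fintype.card_fin]

lemma eq_of_mem_of_mem_support (hU : #U ≤ k) (hfU : ∀ i, f i ∈ U)
    (hf : ∀ i, f i ∈ (P.path i).support) {i : Fin k} {x : V} (hxU : x ∈ U)
    (hx : x ∈ (P.path i).support) : x = f i := by
  obtain ⟨j, -, rfl⟩ := Finset.mem_image.1 ((image_eq_of_mem_support hU hfU hf).symm ▸ hxU)
  rw [P.eq_of_mem_support (hf j) hx]

variable (hU : #U ≤ k) (hmeet : ∀ i, ∃ x ∈ U, x ∈ (P.path i).support)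
include hU hmeet

lemma existsUnique_mem_support (i : Fin k) : ∃! x, x ∈ U ∧ x ∈ (P.path i).support := by
  choose f hfU hf using hmeet
  exact ⟨f i, ⟨hfU i, hf i⟩, fun x ⟨hxU, hx⟩ => eq_of_mem_of_mem_support hU hfU hf hxU hx⟩

lemma exists_mem_support_of_mem {x : V} (hxU : x ∈ U) : ∃ i, x ∈ (P.path i).support := by
  choose f hfU hf using hmeet
  obtain ⟨i, -, rfl⟩ := Finset.mem_image.1 ((image_eq_of_mem_support hU hfU hf).symm ▸ hxU)
  exact ⟨i, hf i⟩

end Transversal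

variable {U : Finset V} (hU : #U ≤ k)
  (hmeet : ∀ (P : Linkage G k s t) i, ∃ x ∈ U, x ∈ (P.path i).support)
include hU hmeet

lemma Adjacent.mem_support_of_mem_support {P Q : Linkage G k s t} (h : P.Adjacent Q)
    {i : Fin k} {x : V} (hxU : x ∈ U) (hx : x ∈ (P.path i).support) :
    x ∈ (Q.path i).support := by
  obtain ⟨i₀, -, heq⟩ := h
  obtain ⟨j, hj⟩ := Q.exists_mem_support_of_mem hU (hmeet Q) hxU
  rcases eq_or_ne i i₀ with rfl | hi
  · rcases eq_or_ne j i with rfl | hji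
    · exact hj
    · exact absurd (P.eq_of_mem_support (heq j hji ▸ hj) hx) hji
  · rwa [← heq i hi]

lemma Reconfigurable.mem_support_iff {P Q : Linkage G k s t} (h : P.Reconfigurable Q)
    {i : Fin k} {x : V} (hxU : x ∈ U) :
    x ∈ (P.path i).support ↔ x ∈ (Q.path i).support := by
  induction h with
  | refl => rfl
  | tail _ hRQ ih =>
    exact ih.trans ⟨hRQ.mem_support_of_mem_support hU hmeet hxU,
      hRQ.symm.mem_support_of_mem_support hU hmeet hxU⟩

end Linkage

theorem terminal_separator_unique_vertex_invariant_general
    {V : Type} [Fintype V] [DecidableEq V] {G : SimpleGraph V} {k : ℕ}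
    (s t : Fin k → V)
    (U : Finset V) (hcard : U.card = k)
    (hsep : IsTerminalSeparator G s t U) :
    (∀ (P : Linkage G k s t) (i : Fin k), ∃! x : V, x ∈ U ∧ x ∈ (P.path i).support) ∧
    (∀ P Q : Linkage G k s t, P.Reconfigurable Q →
      ∀ (i : Fin k) (x : V), x ∈ U →
        (x ∈ (P.path i).support ↔ x ∈ (Q.path i).support)) := by
  have hmeet : ∀ (P : Linkage G k s t) i, ∃ x ∈ U, x ∈ (P.path i).support :=
    fun P i => hsep.2.2 i i (P.path i)
  exact ⟨fun P => P.existsUnique_mem_support hcard.le (hmeet P),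
    fun P Q h _ _ hxU => h.mem_support_iff hcard.le hmeet hxU⟩

/-- If U is a terminal separator of size k, then (a) each path of every linkage contains
exactly one vertex of U, and (b) along any reconfiguration the unique vertex of U on the
i-th path is preserved. -/
theorem terminal_separator_unique_vertex_invariant
    {V : Type} [Fintype V] [DecidableEq V] {G : SimpleGraph V} {k : ℕ}
    (s t : Fin k → V)
    (hdist : Function.Injective (Sum.elim s t : Fin k ⊕ Fin k → V))
    (U : Finset V) (hcard : U.card = k)
    (hsep : IsTerminalSeparator G s t U) :
    (∀ (P : Linkage G k s t) (i : Fin k), ∃! x : V, x ∈ U ∧ x ∈ (P.path i).support) ∧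
    (∀ P Q : Linkage G k s t, P.Reconfigurable Q →
      ∀ (i : Fin k) (x : V), x ∈ U →
        (x ∈ (P.path i).support ↔ x ∈ (Q.path i).support)) :=
  terminal_separator_unique_vertex_invariant_general s t U hcard hsep
end

section
/- Let G be a finite simple graph, s ≠ t vertices, and U an s-t separator of G with |U| = k. If 𝒫 and 𝒬 are adjacent s-t linkages of size k with 𝒬 = (𝒫 ∖ {P}) ∪ {Q} for paths P ∈ 𝒫 and Q ∉ 𝒫, then the unique vertex of U contained in P equals the unique vertex of U contained in Q. Consequently, along any reconfiguration sequence of s-t linkages of size k, the set of vertices of U used by the linkage is invariant, and the replaced path always keeps its vertex of U. -/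
open Set

/-!
Every path of an s-t linkage meets the separator `U`, and two of its paths never share a vertex
of `U` because `U` avoids `s` and `t`. Since `|U| = k`, picking a vertex of `U` on each path is
therefore a bijection from the paths onto `U`: every path contains exactly one vertex of `U`, and
every vertex of `U` is used. In an adjacency step the vertex of `U` on the removed path `p` lies
on no other old path, so in the new linkage it must lie on the new path `q`.
-/

namespace IsSTSeparator

variable {V : Type} [Fintype V] [DecidableEq V] {G : SimpleGraph V} {s t : V} {k : ℕ}
  {U : Finset V}

theorem path_eq_of_mem_support (hU : IsSTSeparator G s t U) (P : STLinkage G s t k)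
    {p q : G.Path s t} (hp : p ∈ P.paths) (hq : q ∈ P.paths) {x : V} (hx : x ∈ U)
    (hxp : x ∈ (p : G.Walk s t).support) (hxq : x ∈ (q : G.Walk s t).support) : p = q := by
  by_contra hpq
  rcases P.disjoint p hp q hq hpq x hxp hxq with rfl | rfl
  exacts [hU.1 hx, hU.2.1 hx]

theorem surjOn_of_mem_support (hU : IsSTSeparator G s t U) (hcard : U.card = k)
    (P : STLinkage G s t k) {f : G.Path s t → V} (hfU : Set.MapsTo f P.paths U)
    (hf : ∀ p ∈ P.paths, f p ∈ (p : G.Walk s t).support) : Set.SurjOn f P.paths U :=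
  Finset.surjOn_of_injOn_of_card_le f hfU
    (fun p hp q hq hpq => hU.path_eq_of_mem_support P hp hq (hfU hp) (hf p hp) (hpq ▸ hf q hq))
    (by rw [P.card_eq, hcard])

theorem exists_mem_paths_mem_support (hU : IsSTSeparator G s t U) (hcard : U.card = k)
    (P : STLinkage G s t k) {x : V} (hx : x ∈ U) :
    ∃ p ∈ P.paths, x ∈ (p : G.Walk s t).support := by
  choose f hfU hf using fun p : G.Path s t => hU.2.2 (p : G.Walk s t)
  obtain ⟨p, hp, rfl⟩ :=
    hU.surjOn_of_mem_support hcard P (fun p _ => hfU p) (fun p _ => hf p) hx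
  exact ⟨p, hp, hf p⟩

theorem vertex_eq_of_mem_support (hU : IsSTSeparator G s t U) (hcard : U.card = k)
    (P : STLinkage G s t k) {p : G.Path s t} (hp : p ∈ P.paths) {x y : V}
    (hx : x ∈ U) (hy : y ∈ U) (hxp : x ∈ (p : G.Walk s t).support)
    (hyp : y ∈ (p : G.Walk s t).support) : x = y := by
  choose f hfU hf using fun p : G.Path s t => hU.2.2 (p : G.Walk s t)
  have h_eq_f : ∀ z ∈ U, z ∈ (p : G.Walk s t).support → z = f p := by
    intro z hz hzp
    obtain ⟨r, hr, rfl⟩ :=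
      hU.surjOn_of_mem_support hcard P (fun p _ => hfU p) (fun p _ => hf p) hz
    rw [hU.path_eq_of_mem_support P hr hp hz (hf r) hzp]
  rw [h_eq_f x hx hxp, h_eq_f y hy hyp]

theorem mem_support_iff_of_paths_eq_insert_erase (hU : IsSTSeparator G s t U)
    (hcard : U.card = k) {P Q : STLinkage G s t k} {p q : G.Path s t} (hp : p ∈ P.paths)
    (hQ : Q.paths = insert q (P.paths.erase p)) {x : V} (hx : x ∈ U) :
    x ∈ (p : G.Walk s t).support ↔ x ∈ (q : G.Walk s t).support := by
  obtain ⟨u, hu, hup⟩ := hU.2.2 (p : G.Walk s t)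
  have huq : u ∈ (q : G.Walk s t).support := by
    obtain ⟨r, hrQ, hur⟩ := hU.exists_mem_paths_mem_support hcard Q hu
    rw [hQ, Finset.mem_insert, Finset.mem_erase] at hrQ
    rcases hrQ with rfl | ⟨hrp, hrP⟩
    · exact hur
    · exact absurd (hU.path_eq_of_mem_support P hrP hp hu hur hup) hrp
  have hqQ : q ∈ Q.paths := hQ ▸ Finset.mem_insert_self q _
  constructor
  · intro hxp
    rwa [hU.vertex_eq_of_mem_support hcard P hp hx hu hxp hup]
  · intro hxq
    rwa [hU.vertex_eq_of_mem_support hcard Q hqQ hx hu hxq huq]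

theorem setOf_mem_support_eq (hU : IsSTSeparator G s t U) (hcard : U.card = k)
    (P : STLinkage G s t k) :
    {x : V | x ∈ U ∧ ∃ p ∈ P.paths, x ∈ (p : G.Walk s t).support} = U :=
  Set.ext fun _ => ⟨And.left, fun hx => ⟨hx, hU.exists_mem_paths_mem_support hcard P hx⟩⟩

end IsSTSeparator

theorem separator_vertex_invariant_along_reconfiguration_general
    {V : Type} [Fintype V] [DecidableEq V] {G : SimpleGraph V}
    {s t : V} {k : ℕ} {U : Finset V}
    (hU : IsSTSeparator G s t U) (hcard : U.card = k) :
    (∀ (P Q : STLinkage G s t k) (p q : G.Path s t),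
      p ∈ P.paths → q ∉ P.paths → Q.paths = insert q (P.paths.erase p) →
      ∀ x ∈ U, (x ∈ (p : G.Walk s t).support ↔ x ∈ (q : G.Walk s t).support)) ∧
    (∀ P Q : STLinkage G s t k, P.Reconfigurable Q →
      {x : V | x ∈ U ∧ ∃ p ∈ P.paths, x ∈ (p : G.Walk s t).support} =
      {x : V | x ∈ U ∧ ∃ q ∈ Q.paths, x ∈ (q : G.Walk s t).support}) :=
  ⟨fun _ _ _ _ hp _ hQ _ hx => hU.mem_support_iff_of_paths_eq_insert_erase hcard hp hQ hx,
    fun P Q _ => by rw [hU.setOf_mem_support_eq hcard P, hU.setOf_mem_support_eq hcard Q]⟩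

/-- Let U be an s-t separator of size k. (a) In any adjacency step of s-t linkages of
size k replacing a path p by a path q, the vertex of U on p equals the vertex of U on q.
(b) Consequently, along any reconfiguration sequence the set of vertices of U used by the
linkage is invariant. -/
theorem separator_vertex_invariant_along_reconfiguration
    {V : Type} [Fintype V] [DecidableEq V] {G : SimpleGraph V}
    {s t : V} (hst : s ≠ t) {k : ℕ} {U : Finset V}
    (hU : IsSTSeparator G s t U) (hcard : U.card = k) :
    (∀ (P Q : STLinkage G s t k) (p q : G.Path s t),
      p ∈ P.paths → q ∉ P.paths → Q.paths = insert q (P.paths.erase p) →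
      ∀ x ∈ U, (x ∈ (p : G.Walk s t).support ↔ x ∈ (q : G.Walk s t).support)) ∧
    (∀ P Q : STLinkage G s t k, P.Reconfigurable Q →
      {x : V | x ∈ U ∧ ∃ p ∈ P.paths, x ∈ (p : G.Walk s t).support} =
      {x : V | x ∈ U ∧ ∃ q ∈ Q.paths, x ∈ (q : G.Walk s t).support}) :=
  separator_vertex_invariant_along_reconfiguration_general hU hcard
end

section
/- Let G be a finite bipartite simple graph with bipartition (A, B), and let M and M' be matchings of G with |M| = |M'| = k. Form the graph G' from G by adding two new vertices s and t, joining s to every vertex of A and t to every vertex of B. For a matching N of G of size k, let 𝒫_N be the s-t linkage of size k in G' consisting of the k paths (s, a, b, t) for the edges {a,b} ∈ N. Then M can be transformed into M' by a sequence of token jumps (each step removes one edge from the current matching and adds one edge, so that every intermediate set is a matching of size k) if and only if 𝒫_M is reconfigurable to 𝒫_{M'} in G'. -/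
open Set

/-- A set of edges of G that forms a matching: all elements are edges and no two distinct
members share a vertex. -/
def IsMatchingSet {V : Type} [Fintype V] [DecidableEq V] (G : SimpleGraph V)
    (N : Finset (Sym2 V)) : Prop :=
  (∀ e ∈ N, e ∈ G.edgeSet) ∧
  ∀ e ∈ N, ∀ f ∈ N, e ≠ f → ∀ v : V, v ∈ e → v ∉ f

/-- A token jump step between matchings of size k: remove one edge and add one edge, with
both endpoints of the step being matchings of size k. -/
def TokenJumpStep {V : Type} [Fintype V] [DecidableEq V] (G : SimpleGraph V) (k : ℕ)
    (N N' : Finset (Sym2 V)) : Prop :=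
  IsMatchingSet G N ∧ IsMatchingSet G N' ∧ N.card = k ∧ N'.card = k ∧
  ∃ e f : Sym2 V, e ∈ N ∧ f ∉ N ∧ N' = insert f (N.erase e)

/-- The graph G' obtained from G by adding a new vertex `Sum.inr false` (called s) joined
to every vertex of A and a new vertex `Sum.inr true` (called t) joined to every vertex
of B. -/
def matchingGraph {V : Type} [Fintype V] [DecidableEq V] (G : SimpleGraph V)
    (A B : Set V) : SimpleGraph (V ⊕ Bool) where
  Adj x y :=
    match x, y with
    | Sum.inl u, Sum.inl v => G.Adj u v
    | Sum.inl u, Sum.inr b => (b = false ∧ u ∈ A) ∨ (b = true ∧ u ∈ B)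
    | Sum.inr b, Sum.inl u => (b = false ∧ u ∈ A) ∨ (b = true ∧ u ∈ B)
    | Sum.inr _, Sum.inr _ => False
  symm := by
    refine ⟨?_⟩
    rintro (u | b) (v | c) h
    · exact G.adj_symm h
    · exact h
    · exact h
    · exact h
  loopless := by
    refine ⟨?_⟩
    rintro (u | b) h
    · exact G.irrefl h
    · exact h

/-- The s-t linkage `𝒫_N` associated with a matching N of the bipartite graph G: it
consists of the paths (s, a, b, t) for the edges {a, b} of N with a ∈ A and b ∈ B. -/
def CorrespondsTo {V : Type} [Fintype V] [DecidableEq V] {G : SimpleGraph V}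
    {A B : Set V} {k : ℕ} (N : Finset (Sym2 V))
    (P : STLinkage (matchingGraph G A B) (Sum.inr false) (Sum.inr true) k) : Prop :=
  ∀ p : (matchingGraph G A B).Path (Sum.inr false) (Sum.inr true),
    p ∈ P.paths ↔ ∃ a b : V, a ∈ A ∧ b ∈ B ∧ s(a, b) ∈ N ∧
      (p : (matchingGraph G A B).Walk (Sum.inr false) (Sum.inr true)).support
        = [Sum.inr false, Sum.inl a, Sum.inl b, Sum.inr true]

/-!
Every s-t path of G' starts s, a, b with a ∈ A and ab an edge of G: since A and B are disjoint,
a is not adjacent to t. Internally disjoint paths have vertex-disjoint first edges, so the first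
edges of any s-t linkage of size k form a matching of size k, which is N for the linkage 𝒫_N.
Exchanging one path changes this matching by a token jump or not at all, and conversely the token
jump e ↦ f is realised by exchanging the path (s, a, b, t) of e for that of f.
-/

open Relation SimpleGraph Sum

theorem Relation.ReflTransGen.of_simulation {α β : Type*} {r : α → α → Prop}
    {r' : β → β → Prop} {C : α → β → Prop}
    (hsim : ∀ a a' b, r a a' → C a b → ∃ b', C a' b' ∧ r' b b')
    (huniq : ∀ a b b', C a b → C a b' → b = b')
    {a a' : α} {b b' : β} (h : ReflTransGen r a a') (hb : C a b) (hb' : C a' b') :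
    ReflTransGen r' b b' := by
  induction h using ReflTransGen.head_induction_on generalizing b with
  | refl => rw [huniq _ _ _ hb hb']
  | head hac _ ih =>
    obtain ⟨c, hc, hbc⟩ := hsim _ _ _ hac hb
    exact .head hbc (ih hc)

theorem Finset.image_erase_of_injOn {α β : Type*} [DecidableEq α] [DecidableEq β] {f : α → β}
    {s : Finset α} (hf : Set.InjOn f s) {a : α} (ha : a ∈ s) :
    (s.erase a).image f = (s.image f).erase (f a) := by
  ext b
  simp only [Finset.mem_image, Finset.mem_erase]
  constructor
  · rintro ⟨x, ⟨hxa, hx⟩, rfl⟩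
    exact ⟨fun h => hxa (hf hx ha h), x, hx, rfl⟩
  · rintro ⟨hb, x, hx, rfl⟩
    exact ⟨x, ⟨by rintro rfl; exact hb rfl, hx⟩, rfl⟩

theorem STLinkage.ext {V : Type} [Fintype V] [DecidableEq V] {G : SimpleGraph V} {s t : V}
    {k : ℕ} {P Q : STLinkage G s t k} (h : P.paths = Q.paths) : P = Q := by
  cases P; cases Q; congr

section MatchingGraph

variable {V : Type} [Fintype V] [DecidableEq V] {G : SimpleGraph V} {A B : Set V} {k : ℕ}

@[simp]
theorem matchingGraph_adj_inl_inl {u v : V} :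
    (matchingGraph G A B).Adj (inl u) (inl v) ↔ G.Adj u v := Iff.rfl

@[simp]
theorem matchingGraph_adj_inr_inl {c : Bool} {u : V} :
    (matchingGraph G A B).Adj (inr c) (inl u) ↔ (c = false ∧ u ∈ A) ∨ (c = true ∧ u ∈ B) :=
  Iff.rfl

@[simp]
theorem matchingGraph_adj_inl_inr {c : Bool} {u : V} :
    (matchingGraph G A B).Adj (inl u) (inr c) ↔ (c = false ∧ u ∈ A) ∨ (c = true ∧ u ∈ B) :=
  Iff.rfl

abbrev STPath (G : SimpleGraph V) (A B : Set V) :=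
  (matchingGraph G A B).Path (inr false) (inr true)

theorem STLinkage.eq_of_inl_mem_support
    {Q : STLinkage (matchingGraph G A B) (inr false) (inr true) k}
    {p q : STPath G A B} (hp : p ∈ Q.paths) (hq : q ∈ Q.paths) {v : V}
    (hvp : inl v ∈ p.1.support) (hvq : inl v ∈ q.1.support) : p = q := by
  by_contra hpq
  simpa using Q.disjoint p hp q hq hpq _ hvp hvq

theorem exists_adj_prefix_support (hAB : Disjoint A B) (p : STPath G A B) :
    ∃ ab : V × V, G.Adj ab.1 ab.2 ∧ [inr false, inl ab.1, inl ab.2] <+: p.1.support := by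
  obtain ⟨w, hw⟩ := p
  cases w with
  | @cons _ x _ h w =>
    rcases x with a | c
    swap
    · exact h.elim
    have ha : a ∈ A := by simpa using h
    cases w with
    | @cons _ y _ h' w =>
      rcases y with b | c
      · refine ⟨(a, b), h', w.support.tail, ?_⟩
        conv_rhs => rw [Walk.support_cons, Walk.support_cons, ← w.cons_tail_support]
        rfl
      · rcases matchingGraph_adj_inl_inr.mp h' with ⟨rfl, -⟩ | ⟨-, haB⟩
        · exact (((Walk.cons_isPath_iff _ _).mp hw).2 (by simp)).elim
        · exact absurd haB (Set.disjoint_left.mp hAB ha)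

noncomputable def firstEdge (hAB : Disjoint A B) (p : STPath G A B) : Sym2 V :=
  let ab := (exists_adj_prefix_support hAB p).choose
  s(ab.1, ab.2)

theorem firstEdge_mem_edgeSet (hAB : Disjoint A B) (p : STPath G A B) :
    firstEdge hAB p ∈ G.edgeSet :=
  (exists_adj_prefix_support hAB p).choose_spec.1

theorem inl_mem_support_of_mem_firstEdge (hAB : Disjoint A B) {p : STPath G A B} {v : V}
    (hv : v ∈ firstEdge hAB p) : inl v ∈ p.1.support := by
  have hpre := (exists_adj_prefix_support hAB p).choose_spec.2
  rcases Sym2.mem_iff.mp hv with rfl | rfl <;> exact hpre.subset (by simp)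

theorem firstEdge_eq_of_prefix (hAB : Disjoint A B) {p : STPath G A B} {a b : V}
    (h : [inr false, inl a, inl b] <+: p.1.support) : firstEdge hAB p = s(a, b) := by
  have hpre := (exists_adj_prefix_support hAB p).choose_spec.2
  have := (List.prefix_of_prefix_length_le hpre h le_rfl).eq_of_length rfl
  simp only [List.cons.injEq, inl.injEq, and_true, true_and] at this
  rw [firstEdge, this.1, this.2]

def IsPathThrough (e : Sym2 V) (p : STPath G A B) : Prop :=
  ∃ a b : V, a ∈ A ∧ b ∈ B ∧ s(a, b) = e ∧
    p.1.support = [inr false, inl a, inl b, inr true]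

theorem IsPathThrough.firstEdge_eq (hAB : Disjoint A B) {e : Sym2 V} {p : STPath G A B}
    (h : IsPathThrough e p) : firstEdge hAB p = e := by
  obtain ⟨a, b, -, -, rfl, hs⟩ := h
  exact firstEdge_eq_of_prefix hAB ⟨[inr true], by simp [hs]⟩

theorem IsPathThrough.inl_mem_support_iff {e : Sym2 V} {p : STPath G A B}
    (h : IsPathThrough e p) {v : V} : inl v ∈ p.1.support ↔ v ∈ e := by
  obtain ⟨a, b, -, -, rfl, hs⟩ := h
  simp [hs]

theorem IsPathThrough.unique (hAB : Disjoint A B) {e : Sym2 V} {p q : STPath G A B}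
    (hp : IsPathThrough e p) (hq : IsPathThrough e q) : p = q := by
  obtain ⟨a, b, ha, hb, rfl, hps⟩ := hp
  obtain ⟨a', b', ha', hb', he, hqs⟩ := hq
  rcases Sym2.eq_iff.mp he with ⟨rfl, rfl⟩ | ⟨rfl, -⟩
  · exact Subtype.ext (Walk.ext_support (hps.trans hqs.symm))
  · exact absurd hb (Set.disjoint_left.mp hAB ha')

theorem exists_isPathThrough_mk {a b : V} (ha : a ∈ A) (hb : b ∈ B) (hab : G.Adj a b) :
    ∃ p : STPath G A B, IsPathThrough s(a, b) p := by
  let w : (matchingGraph G A B).Walk (inr false) (inr true) :=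
    .cons (v := inl a) (by simp [ha]) (.cons (v := inl b) (by simpa using hab)
      (.cons (by simp [hb]) .nil))
  have hw : w.IsPath := by simp [w, Walk.isPath_def, hab.ne]
  exact ⟨⟨w, hw⟩, a, b, ha, hb, rfl, rfl⟩

theorem exists_isPathThrough (hbip : ∀ u v : V, G.Adj u v → (u ∈ A ∧ v ∈ B) ∨ (u ∈ B ∧ v ∈ A))
    {e : Sym2 V} (he : e ∈ G.edgeSet) : ∃ p : STPath G A B, IsPathThrough e p := by
  induction e using Sym2.ind with
  | _ u v =>
    rcases hbip u v he with ⟨hu, hv⟩ | ⟨hu, hv⟩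
    · exact exists_isPathThrough_mk hu hv he
    · exact Sym2.eq_swap ▸ exists_isPathThrough_mk hv hu (G.adj_symm he)

open Classical in
noncomputable def pathsOf (N : Finset (Sym2 V)) : Finset (STPath G A B) :=
  {p | ∃ e ∈ N, IsPathThrough e p}

theorem mem_pathsOf {N : Finset (Sym2 V)} {p : STPath G A B} :
    p ∈ pathsOf N ↔ ∃ e ∈ N, IsPathThrough e p := by
  simp [pathsOf]

theorem card_pathsOf (hbip : ∀ u v : V, G.Adj u v → (u ∈ A ∧ v ∈ B) ∨ (u ∈ B ∧ v ∈ A))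
    (hAB : Disjoint A B) {N : Finset (Sym2 V)} (hN : ∀ e ∈ N, e ∈ G.edgeSet) :
    (pathsOf N : Finset (STPath G A B)).card = N.card := by
  refine Finset.card_nbij (firstEdge hAB) ?_ ?_ ?_
  · intro p hp
    obtain ⟨e, he, hp⟩ := mem_pathsOf.mp hp
    simpa [hp.firstEdge_eq hAB] using he
  · intro p hp q hq hpq
    obtain ⟨e, -, hpe⟩ := mem_pathsOf.mp hp
    obtain ⟨f, -, hqf⟩ := mem_pathsOf.mp hq
    rw [hpe.firstEdge_eq hAB, hqf.firstEdge_eq hAB] at hpq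
    exact hpe.unique hAB (hpq ▸ hqf)
  · intro e he
    obtain ⟨p, hp⟩ := exists_isPathThrough hbip (hN e he)
    exact ⟨p, mem_pathsOf.mpr ⟨e, he, hp⟩, hp.firstEdge_eq hAB⟩

theorem pathsOf_disjoint (hAB : Disjoint A B) {N : Finset (Sym2 V)} (hN : IsMatchingSet G N)
    {p q : STPath G A B} (hp : p ∈ pathsOf N) (hq : q ∈ pathsOf N) (hpq : p ≠ q)
    {x : V ⊕ Bool} (hxp : x ∈ p.1.support) (hxq : x ∈ q.1.support) :
    x = inr false ∨ x = inr true := by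
  obtain ⟨e, he, hpe⟩ := mem_pathsOf.mp hp
  obtain ⟨f, hf, hqf⟩ := mem_pathsOf.mp hq
  rcases x with v | c
  · have hef : e ≠ f := by
      rintro rfl
      exact hpq (hpe.unique hAB hqf)
    exact (hN.2 e he f hf hef v (hpe.inl_mem_support_iff.mp hxp)
      (hqf.inl_mem_support_iff.mp hxq)).elim
  · cases c <;> simp

noncomputable def linkageOf (hbip : ∀ u v : V, G.Adj u v → (u ∈ A ∧ v ∈ B) ∨ (u ∈ B ∧ v ∈ A))
    (hAB : Disjoint A B) {N : Finset (Sym2 V)} (hN : IsMatchingSet G N) (hk : N.card = k) :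
    STLinkage (matchingGraph G A B) (inr false) (inr true) k where
  paths := pathsOf N
  card_eq := (card_pathsOf hbip hAB hN.1).trans hk
  disjoint _ hp _ hq hpq _ := pathsOf_disjoint hAB hN hp hq hpq

theorem pathsOf_insert_erase (hAB : Disjoint A B) {N : Finset (Sym2 V)} {e f : Sym2 V}
    {p q : STPath G A B} (hp : IsPathThrough e p) (hq : IsPathThrough f q) :
    pathsOf (insert f (N.erase e)) = insert q ((pathsOf N).erase p) := by
  ext r
  simp only [Finset.mem_insert, Finset.mem_erase, mem_pathsOf]
  constructor
  · rintro ⟨e', he' | ⟨hne, he'⟩, hr⟩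
    · exact .inl (hr.unique hAB (he' ▸ hq))
    · refine .inr ⟨?_, e', he', hr⟩
      rintro rfl
      exact hne ((hr.firstEdge_eq hAB).symm.trans (hp.firstEdge_eq hAB))
  · rintro (rfl | ⟨hrp, e', he', hr⟩)
    · exact ⟨f, .inl rfl, hq⟩
    · refine ⟨e', .inr ⟨?_, he'⟩, hr⟩
      rintro rfl
      exact hrp (hr.unique hAB hp)

variable {Q Q' : STLinkage (matchingGraph G A B) (inr false) (inr true) k}

theorem correspondsTo_iff {N : Finset (Sym2 V)} : CorrespondsTo N Q ↔ Q.paths = pathsOf N := by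
  simp only [CorrespondsTo, Finset.ext_iff, mem_pathsOf, IsPathThrough]
  refine forall_congr' fun p => iff_congr Iff.rfl ?_
  aesop

theorem CorrespondsTo.unique {N : Finset (Sym2 V)} (hQ : CorrespondsTo N Q)
    (hQ' : CorrespondsTo N Q') : Q = Q' :=
  STLinkage.ext ((correspondsTo_iff.mp hQ).trans (correspondsTo_iff.mp hQ').symm)

theorem correspondsTo_linkageOf
    (hbip : ∀ u v : V, G.Adj u v → (u ∈ A ∧ v ∈ B) ∨ (u ∈ B ∧ v ∈ A))
    (hAB : Disjoint A B) {N : Finset (Sym2 V)} (hN : IsMatchingSet G N) (hk : N.card = k) :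
    CorrespondsTo N (linkageOf hbip hAB hN hk) :=
  correspondsTo_iff.mpr rfl

theorem CorrespondsTo.adjacent
    (hbip : ∀ u v : V, G.Adj u v → (u ∈ A ∧ v ∈ B) ∨ (u ∈ B ∧ v ∈ A))
    (hAB : Disjoint A B) {N N' : Finset (Sym2 V)} (hstep : TokenJumpStep G k N N')
    (hQ : CorrespondsTo N Q) (hQ' : CorrespondsTo N' Q') : Q.Adjacent Q' := by
  obtain ⟨hN, hN', -, -, e, f, he, hf, rfl⟩ := hstep
  obtain ⟨p, hp⟩ := exists_isPathThrough hbip (hN.1 e he)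
  obtain ⟨q, hq⟩ := exists_isPathThrough hbip (hN'.1 f (Finset.mem_insert_self f _))
  rw [correspondsTo_iff] at hQ hQ'
  refine ⟨p, q, hQ ▸ mem_pathsOf.mpr ⟨e, he, hp⟩, ?_, hQ' ▸ hQ ▸ pathsOf_insert_erase hAB hp hq⟩
  rw [hQ, mem_pathsOf]
  rintro ⟨e', he', hqe'⟩
  exact hf ((hq.firstEdge_eq hAB).symm.trans (hqe'.firstEdge_eq hAB) ▸ he')

noncomputable def matchingOf (hAB : Disjoint A B)
    (Q : STLinkage (matchingGraph G A B) (inr false) (inr true) k) : Finset (Sym2 V) :=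
  Q.paths.image (firstEdge hAB)

theorem firstEdge_injOn (hAB : Disjoint A B) :
    Set.InjOn (firstEdge hAB) (Q.paths : Set (STPath G A B)) := by
  intro p hp q hq hpq
  have hv := Sym2.out_fst_mem (firstEdge hAB p)
  exact Q.eq_of_inl_mem_support hp hq (inl_mem_support_of_mem_firstEdge hAB hv)
    (inl_mem_support_of_mem_firstEdge hAB (hpq ▸ hv))

theorem card_matchingOf (hAB : Disjoint A B) : (matchingOf hAB Q).card = k := by
  rw [matchingOf, Finset.card_image_of_injOn (firstEdge_injOn hAB), Q.card_eq]

theorem isMatchingSet_matchingOf (hAB : Disjoint A B) : IsMatchingSet G (matchingOf hAB Q) := by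
  refine ⟨fun e he => ?_, fun e he f hf hef v hve hvf => ?_⟩
  · obtain ⟨p, -, rfl⟩ := Finset.mem_image.mp he
    exact firstEdge_mem_edgeSet hAB p
  · obtain ⟨p, hp, rfl⟩ := Finset.mem_image.mp he
    obtain ⟨q, hq, rfl⟩ := Finset.mem_image.mp hf
    exact hef (congrArg _ (Q.eq_of_inl_mem_support hp hq
      (inl_mem_support_of_mem_firstEdge hAB hve) (inl_mem_support_of_mem_firstEdge hAB hvf)))

theorem CorrespondsTo.matchingOf_eq (hAB : Disjoint A B) {N : Finset (Sym2 V)} (hk : N.card = k)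
    (hQ : CorrespondsTo N Q) : matchingOf hAB Q = N := by
  refine Finset.eq_of_subset_of_card_le (fun e he => ?_) (by rw [hk, card_matchingOf])
  obtain ⟨p, hp, rfl⟩ := Finset.mem_image.mp he
  obtain ⟨e, heN, hpe⟩ := mem_pathsOf.mp (correspondsTo_iff.mp hQ ▸ hp)
  rwa [hpe.firstEdge_eq hAB]

theorem STLinkage.Adjacent.reflGen_tokenJumpStep (hAB : Disjoint A B) (h : Q.Adjacent Q') :
    ReflGen (TokenJumpStep G k) (matchingOf hAB Q) (matchingOf hAB Q') := by
  obtain ⟨p, q, hp, hq, hQ'⟩ := h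
  have hQ'_image : matchingOf hAB Q' =
      insert (firstEdge hAB q) ((matchingOf hAB Q).erase (firstEdge hAB p)) := by
    rw [matchingOf, hQ', Finset.image_insert, Finset.image_erase_of_injOn (firstEdge_injOn hAB) hp,
      matchingOf]
  by_cases hqp : firstEdge hAB q = firstEdge hAB p
  · rw [hQ'_image, hqp, Finset.insert_erase
      (show firstEdge hAB p ∈ matchingOf hAB Q from Finset.mem_image_of_mem _ hp)]
  refine .single ⟨isMatchingSet_matchingOf hAB, isMatchingSet_matchingOf hAB, card_matchingOf hAB,
    card_matchingOf hAB, _, _, Finset.mem_image_of_mem _ hp, ?_, hQ'_image⟩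
  intro hq_image
  obtain ⟨r, hr, hrq⟩ := Finset.mem_image.mp hq_image
  have hrp : r ≠ p := by
    rintro rfl
    exact hqp hrq.symm
  have hrQ' : r ∈ Q'.paths := hQ' ▸ Finset.mem_insert_of_mem (Finset.mem_erase.mpr ⟨hrp, hr⟩)
  have hqQ' : q ∈ Q'.paths := hQ' ▸ Finset.mem_insert_self q _
  exact hq (firstEdge_injOn hAB hrQ' hqQ' hrq ▸ hr)

end MatchingGraph

theorem matching_token_jump_iff_st_linkage_reconfigurable_general
    {V : Type} [Fintype V] [DecidableEq V] (G : SimpleGraph V) (A B : Set V)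
    (hdisjAB : A ∩ B = ∅)
    (hbip : ∀ u v : V, G.Adj u v → (u ∈ A ∧ v ∈ B) ∨ (u ∈ B ∧ v ∈ A))
    {k : ℕ} (M M' : Finset (Sym2 V))
    (hMk : M.card = k) (hM'k : M'.card = k)
    (P P' : STLinkage (matchingGraph G A B) (Sum.inr false) (Sum.inr true) k)
    (hP : CorrespondsTo M P) (hP' : CorrespondsTo M' P') :
    Relation.ReflTransGen (TokenJumpStep G k) M M' ↔ P.Reconfigurable P' := by
  have hAB : Disjoint A B := Set.disjoint_iff_inter_eq_empty.mpr hdisjAB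
  constructor
  · intro h
    refine h.of_simulation (fun N N' Q hstep hQ => ?_) (fun _ _ _ h h' => h.unique h') hP hP'
    have hN' := correspondsTo_linkageOf hbip hAB hstep.2.1 hstep.2.2.2.1
    exact ⟨_, hN', hQ.adjacent hbip hAB hstep hN'⟩
  · intro h
    have hmatch : ReflTransGen (TokenJumpStep G k) (matchingOf hAB P) (matchingOf hAB P') :=
      ReflTransGen.lift' (matchingOf hAB)
        (fun _ _ hQ => (hQ.reflGen_tokenJumpStep hAB).to_reflTransGen) _ _ h
    rwa [hP.matchingOf_eq hAB hMk, hP'.matchingOf_eq hAB hM'k] at hmatch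

/-- Matching reconfiguration under token jumping in a bipartite graph corresponds to
Disjoint s-t Paths Reconfiguration: M can be transformed into M' by token jumps iff the
associated s-t linkage of M is reconfigurable to that of M' in the auxiliary graph. -/
theorem matching_token_jump_iff_st_linkage_reconfigurable
    {V : Type} [Fintype V] [DecidableEq V] (G : SimpleGraph V) (A B : Set V)
    (hcover : A ∪ B = Set.univ) (hdisjAB : A ∩ B = ∅)
    (hbip : ∀ u v : V, G.Adj u v → (u ∈ A ∧ v ∈ B) ∨ (u ∈ B ∧ v ∈ A))
    {k : ℕ} (M M' : Finset (Sym2 V))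
    (hM : IsMatchingSet G M) (hM' : IsMatchingSet G M')
    (hMk : M.card = k) (hM'k : M'.card = k)
    (P P' : STLinkage (matchingGraph G A B) (Sum.inr false) (Sum.inr true) k)
    (hP : CorrespondsTo M P) (hP' : CorrespondsTo M' P') :
    Relation.ReflTransGen (TokenJumpStep G k) M M' ↔ P.Reconfigurable P' :=
  matching_token_jump_iff_st_linkage_reconfigurable_general G A B hdisjAB hbip M M' hMk hM'k P P' hP
    hP'
end
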